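/- Let ρ be as defined from Φ. For every T ≥ 1, every x ∈ ℝ^d and 0 < t/2 ≤ s ≤ t ≤ T: ρ(t,x) ≤ ρ(s,x) ≤ 2c ρ(t,x), where c = (2(2/a₁)^{1/δ₁}/Φ⁻¹((2T)⁻¹))^{d+2}. -/

import Mathlib

open Real

/-- The function `ρ(t,x) = Φ((1/Φ⁻¹(t⁻¹) + |x|)⁻¹) (1/Φ⁻¹(t⁻¹) + |x|)^{-d}`. -/
noncomputable def rho (d : ℕ) (Φ Φinv : ℝ → ℝ) (t : ℝ)
    (x : EuclideanSpace ℝ (Fin d)) : ℝ :=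
  Φ (((Φinv t⁻¹)⁻¹ + ‖x‖)⁻¹) / ((Φinv t⁻¹)⁻¹ + ‖x‖) ^ d

/-!
Both bounds compare `u ↦ Φ(u⁻¹) / u^d` at `A = Φ⁻¹(t⁻¹)⁻¹ + |x|` and `B = Φ⁻¹(s⁻¹)⁻¹ + |x|`.
Since `s ≤ t` we have `B ≤ A`, and this profile is decreasing. Conversely the weak lower scaling
at `max(r, 1)` with `λ = (2/a₁)^{1/δ₁}` gives `2Φ(r) ≤ Φ(λ max(r, 1))`, so
`Φ⁻¹(s⁻¹) ≤ Φ⁻¹(2 t⁻¹) ≤ λ max(Φ⁻¹(t⁻¹), 1)`, which is at most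
`K Φ⁻¹(t⁻¹)` for `K = 2λ / Φ⁻¹((2T)⁻¹)`. Hence `A ≤ K B`, and the upper scaling `Φ(μ r) ≤ μ² Φ(r)`
costs the factor `(A/B)^{d+2} ≤ K^{d+2}`.
-/

noncomputable def profile (d : ℕ) (Φ : ℝ → ℝ) (u : ℝ) : ℝ :=
  Φ u⁻¹ / u ^ d

theorem rho_eq_profile (d : ℕ) (Φ Φinv : ℝ → ℝ) (t : ℝ) (x : EuclideanSpace ℝ (Fin d)) :
    rho d Φ Φinv t x = profile d Φ ((Φinv t⁻¹)⁻¹ + ‖x‖) :=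
  rfl

theorem inv_add_le_mul_inv_add {r R K c : ℝ} (hr : 0 < r) (hR : 0 < R) (hRK : R ≤ K * r)
    (hK : 1 ≤ K) (hc : 0 ≤ c) : r⁻¹ + c ≤ K * (R⁻¹ + c) := by
  have hinv : r⁻¹ ≤ K * R⁻¹ := by
    rw [inv_le_iff_one_le_mul₀ hr]
    calc (1 : ℝ) = R⁻¹ * R := (inv_mul_cancel₀ hR.ne').symm
      _ ≤ R⁻¹ * (K * r) := by gcongr
      _ = K * R⁻¹ * r := by ring
  nlinarith

section

variable {Φ Φinv : ℝ → ℝ}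

theorem profile_nonneg (d : ℕ) (hΦpos : ∀ r, 0 < r → 0 < Φ r) {u : ℝ} (hu : 0 < u) :
    0 ≤ profile d Φ u :=
  div_nonneg (hΦpos _ (inv_pos.mpr hu)).le (pow_pos hu d).le

theorem profile_antitoneOn (d : ℕ) (hΦ : MonotoneOn Φ (Set.Ioi 0))
    (hΦpos : ∀ r, 0 < r → 0 < Φ r) : AntitoneOn (profile d Φ) (Set.Ioi 0) := by
  intro B (hB : 0 < B) A (hA : 0 < A) hBA
  exact div_le_div₀ (hΦpos _ (inv_pos.mpr hB)).le
    (hΦ (inv_pos.mpr hA) (inv_pos.mpr hB) (inv_anti₀ hB hBA))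
    (pow_pos hB d) (pow_le_pow_left₀ hB.le hBA d)

theorem profile_le_pow_mul_profile (d : ℕ)
    (hup : ∀ lam r : ℝ, 1 ≤ lam → 0 < r → Φ (lam * r) ≤ lam ^ 2 * Φ r)
    (hΦpos : ∀ r, 0 < r → 0 < Φ r) {A B K : ℝ} (hB : 0 < B) (hBA : B ≤ A) (hAB : A ≤ K * B) :
    profile d Φ B ≤ K ^ (d + 2) * profile d Φ A := by
  have hA : 0 < A := hB.trans_le hBA
  have hscale : Φ B⁻¹ ≤ (A / B) ^ 2 * Φ A⁻¹ := by
    have h := hup (A / B) A⁻¹ ((one_le_div hB).mpr hBA) (inv_pos.mpr hA)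
    rwa [show A / B * A⁻¹ = B⁻¹ by field_simp] at h
  calc profile d Φ B ≤ (A / B) ^ 2 * Φ A⁻¹ / B ^ d := by
        unfold profile; gcongr
    _ = (A / B) ^ (d + 2) * profile d Φ A := by
        unfold profile
        rw [div_pow, div_pow, pow_add, pow_add]
        field_simp
    _ ≤ K ^ (d + 2) * profile d Φ A := by
        gcongr
        · exact profile_nonneg d hΦpos hA
        · exact (div_le_iff₀ hB).mpr hAB

theorem profile_inv_add_le_and_le_pow_mul (d : ℕ) (hΦ : MonotoneOn Φ (Set.Ioi 0))
    (hΦpos : ∀ r, 0 < r → 0 < Φ r)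
    (hup : ∀ lam r : ℝ, 1 ≤ lam → 0 < r → Φ (lam * r) ≤ lam ^ 2 * Φ r)
    {r R K c : ℝ} (hr : 0 < r) (hrR : r ≤ R) (hRK : R ≤ K * r) (hK : 1 ≤ K) (hc : 0 ≤ c) :
    profile d Φ (r⁻¹ + c) ≤ profile d Φ (R⁻¹ + c) ∧
      profile d Φ (R⁻¹ + c) ≤ K ^ (d + 2) * profile d Φ (r⁻¹ + c) := by
  have hR : 0 < R := hr.trans_le hrR
  have hB : 0 < R⁻¹ + c := by positivity
  have hBA : R⁻¹ + c ≤ r⁻¹ + c := by gcongr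
  exact ⟨profile_antitoneOn d hΦ hΦpos hB (Set.mem_Ioi.mpr (by positivity)) hBA,
    profile_le_pow_mul_profile d hup hΦpos hB hBA (inv_add_le_mul_inv_add hr hR hRK hK hc)⟩

theorem rightInv_le_of_le_apply (hΦ : StrictMonoOn Φ (Set.Ioi 0))
    (hinvpos : ∀ r, 0 < r → 0 < Φinv r) (hright : ∀ r, 0 < r → Φ (Φinv r) = r)
    {u y : ℝ} (hu : 0 < u) (hy : 0 < y) (h : u ≤ Φ y) : Φinv u ≤ y := by
  rwa [← hΦ.le_iff_le (hinvpos u hu) hy, hright u hu]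

theorem rightInv_monotoneOn (hΦ : StrictMonoOn Φ (Set.Ioi 0))
    (hinvpos : ∀ r, 0 < r → 0 < Φinv r) (hright : ∀ r, 0 < r → Φ (Φinv r) = r) :
    MonotoneOn Φinv (Set.Ioi 0) := by
  intro a (ha : 0 < a) b (hb : 0 < b) hab
  exact rightInv_le_of_le_apply hΦ hinvpos hright ha (hinvpos b hb) (by rwa [hright b hb])

theorem two_mul_le_apply_mul_max {a₁ δ₁ : ℝ} (hδ₁ : 0 < δ₁) (ha₁ : 0 < a₁) (ha₁_le : a₁ ≤ 2)
    (hΦ : MonotoneOn Φ (Set.Ioi 0))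
    (hlow : ∀ lam r : ℝ, 1 ≤ lam → 1 ≤ r → a₁ * lam ^ δ₁ * Φ r ≤ Φ (lam * r))
    {r : ℝ} (hr : 0 < r) : 2 * Φ r ≤ Φ ((2 / a₁) ^ (1 / δ₁) * max r 1) := by
  have hlam : 1 ≤ (2 / a₁) ^ (1 / δ₁) :=
    one_le_rpow ((one_le_div ha₁).mpr ha₁_le) (by positivity)
  have hpow : ((2 / a₁) ^ (1 / δ₁)) ^ δ₁ = 2 / a₁ := by
    rw [← rpow_mul (by positivity), one_div_mul_cancel hδ₁.ne', rpow_one]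
  calc 2 * Φ r ≤ 2 * Φ (max r 1) := by
        gcongr
        exact hΦ hr (hr.trans_le (le_max_left r 1)) (le_max_left r 1)
    _ = a₁ * ((2 / a₁) ^ (1 / δ₁)) ^ δ₁ * Φ (max r 1) := by
        rw [hpow, mul_div_cancel₀ _ ha₁.ne']
    _ ≤ Φ ((2 / a₁) ^ (1 / δ₁) * max r 1) := hlow _ _ hlam (le_max_right r 1)

theorem rightInv_inv_le_of_half_le {a₁ δ₁ : ℝ} (hδ₁ : 0 < δ₁) (ha₁ : 0 < a₁) (ha₁_le : a₁ ≤ 2)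
    (hΦ : StrictMonoOn Φ (Set.Ioi 0))
    (hinvpos : ∀ r, 0 < r → 0 < Φinv r) (hright : ∀ r, 0 < r → Φ (Φinv r) = r)
    (hlow : ∀ lam r : ℝ, 1 ≤ lam → 1 ≤ r → a₁ * lam ^ δ₁ * Φ r ≤ Φ (lam * r))
    {s t m : ℝ} (ht : 0 < t) (hts : t / 2 ≤ s) (hm : 0 < m) (hm1 : m ≤ 1)
    (hmt : m ≤ Φinv t⁻¹) :
    Φinv s⁻¹ ≤ (2 / a₁) ^ (1 / δ₁) / m * Φinv t⁻¹ := by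
  have hs : 0 < s := by linarith
  have hr : 0 < Φinv t⁻¹ := hinvpos _ (inv_pos.mpr ht)
  refine rightInv_le_of_le_apply hΦ hinvpos hright (inv_pos.mpr hs) (by positivity) ?_
  calc s⁻¹ ≤ 2 * t⁻¹ := by
        rw [inv_le_comm₀ hs (by positivity), mul_inv, inv_inv]; linarith
    _ = 2 * Φ (Φinv t⁻¹) := by rw [hright _ (inv_pos.mpr ht)]
    _ ≤ Φ ((2 / a₁) ^ (1 / δ₁) * max (Φinv t⁻¹) 1) :=
        two_mul_le_apply_mul_max hδ₁ ha₁ ha₁_le hΦ.monotoneOn hlow hr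
    _ ≤ Φ ((2 / a₁) ^ (1 / δ₁) / m * Φinv t⁻¹) := by
        have hmax : max (Φinv t⁻¹) 1 ≤ Φinv t⁻¹ / m :=
          max_le (le_div_self hr.le hm hm1) ((one_le_div hm).mpr hmt)
        refine hΦ.monotoneOn (Set.mem_Ioi.mpr (by positivity)) (Set.mem_Ioi.mpr (by positivity)) ?_
        rw [div_mul_eq_mul_div, mul_div_assoc]
        gcongr

end

theorem stmt_9_general (d : ℕ) (Φ Φinv : ℝ → ℝ) (a₁ δ₁ : ℝ)
    (hδ₁ : 0 < δ₁) (ha₁ : 0 < a₁) (ha₂ : a₁ < 1)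
    (hΦpos : ∀ t : ℝ, 0 < t → 0 < Φ t)
    (hΦmono : ∀ s t : ℝ, 0 < s → s < t → Φ s < Φ t)
    (hΦ1 : Φ 1 = 1)
    (hinvpos : ∀ r : ℝ, 0 < r → 0 < Φinv r)
    (hright : ∀ r : ℝ, 0 < r → Φ (Φinv r) = r)
    (hup : ∀ lam r : ℝ, 1 ≤ lam → 0 < r → Φ (lam * r) ≤ lam ^ 2 * Φ r)
    (hlow : ∀ lam r : ℝ, 1 ≤ lam → 1 ≤ r → a₁ * lam ^ δ₁ * Φ r ≤ Φ (lam * r))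
    (T : ℝ) (hT : 1 ≤ T) :
    ∀ s t : ℝ, 0 < t → t / 2 ≤ s → s ≤ t → t ≤ T → ∀ x : EuclideanSpace ℝ (Fin d),
      rho d Φ Φinv t x ≤ rho d Φ Φinv s x ∧
      rho d Φ Φinv s x ≤
        2 * (2 * (2 / a₁) ^ ((1 : ℝ) / δ₁) / Φinv ((2 * T)⁻¹)) ^ (d + 2) *
          rho d Φ Φinv t x := by
  intro s t ht hts hst htT x
  have hΦ : StrictMonoOn Φ (Set.Ioi 0) := fun a ha b _ hab => hΦmono a b ha hab
  have hinvmono := rightInv_monotoneOn hΦ hinvpos hright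
  set m := Φinv (2 * T)⁻¹
  have hm : 0 < m := hinvpos _ (by positivity)
  have hm1 : m ≤ 1 := rightInv_le_of_le_apply hΦ hinvpos hright (by positivity) one_pos
    (by rw [hΦ1]; exact inv_le_one_of_one_le₀ (by linarith))
  have hmr : m ≤ Φinv t⁻¹ :=
    hinvmono (by positivity : (0 : ℝ) < (2 * T)⁻¹) (inv_pos.mpr ht) (inv_anti₀ ht (by linarith))
  have hs : 0 < s := by linarith
  have hr : 0 < Φinv t⁻¹ := hinvpos _ (inv_pos.mpr ht)
  have hrR : Φinv t⁻¹ ≤ Φinv s⁻¹ := hinvmono (inv_pos.mpr ht) (inv_pos.mpr hs) (inv_anti₀ hs hst)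
  have hlam : 1 ≤ (2 / a₁) ^ ((1 : ℝ) / δ₁) :=
    one_le_rpow ((one_le_div ha₁).mpr (by linarith)) (by positivity)
  have hRK : Φinv s⁻¹ ≤ 2 * (2 / a₁) ^ ((1 : ℝ) / δ₁) / m * Φinv t⁻¹ := by
    refine (rightInv_inv_le_of_half_le hδ₁ ha₁ (by linarith) hΦ hinvpos hright hlow ht hts hm
      hm1 hmr).trans ?_
    gcongr
    linarith
  have hK : 1 ≤ 2 * (2 / a₁) ^ ((1 : ℝ) / δ₁) / m := by
    rw [le_div_iff₀ hm]
    linarith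
  obtain ⟨hanti, hscale⟩ := profile_inv_add_le_and_le_pow_mul d hΦ.monotoneOn hΦpos hup
    hr hrR hRK hK (norm_nonneg x)
  refine ⟨hanti, hscale.trans ?_⟩
  rw [rho_eq_profile, mul_assoc]
  exact le_mul_of_one_le_left (mul_nonneg (pow_nonneg (by linarith) _)
    (profile_nonneg d hΦpos (by positivity))) one_le_two

/-- For every `T ≥ 1`, every `x ∈ ℝ^d` and `0 < t/2 ≤ s ≤ t ≤ T`:
`ρ(t,x) ≤ ρ(s,x) ≤ 2c ρ(t,x)`, where `c = (2(2/a₁)^{1/δ₁}/Φ⁻¹((2T)⁻¹))^{d+2}`. -/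
theorem stmt_9 (d : ℕ) (hd : 1 ≤ d) (Φ Φinv : ℝ → ℝ) (a₁ δ₁ : ℝ)
    (hδ₁ : 0 < δ₁) (hδ₂ : δ₁ ≤ 2) (ha₁ : 0 < a₁) (ha₂ : a₁ < 1)
    (hΦpos : ∀ t : ℝ, 0 < t → 0 < Φ t)
    (hΦmono : ∀ s t : ℝ, 0 < s → s < t → Φ s < Φ t)
    (hΦ1 : Φ 1 = 1)
    (hinvpos : ∀ r : ℝ, 0 < r → 0 < Φinv r)
    (hleft : ∀ t : ℝ, 0 < t → Φinv (Φ t) = t)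
    (hright : ∀ r : ℝ, 0 < r → Φ (Φinv r) = r)
    (hup : ∀ lam r : ℝ, 1 ≤ lam → 0 < r → Φ (lam * r) ≤ lam ^ 2 * Φ r)
    (hlow : ∀ lam r : ℝ, 1 ≤ lam → 1 ≤ r → a₁ * lam ^ δ₁ * Φ r ≤ Φ (lam * r))
    (T : ℝ) (hT : 1 ≤ T) :
    ∀ s t : ℝ, 0 < t → t / 2 ≤ s → s ≤ t → t ≤ T → ∀ x : EuclideanSpace ℝ (Fin d),
      rho d Φ Φinv t x ≤ rho d Φ Φinv s x ∧
      rho d Φ Φinv s x ≤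
        2 * (2 * (2 / a₁) ^ ((1 : ℝ) / δ₁) / Φinv ((2 * T)⁻¹)) ^ (d + 2) *
          rho d Φ Φinv t x :=
  stmt_9_general d Φ Φinv a₁ δ₁ hδ₁ ha₁ ha₂ hΦpos hΦmono hΦ1 hinvpos hright hup hlow T hT
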